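/- arXiv:1107.0414 — 2 statements merged into one kernel-verified Lean document; each statement's English description precedes it below -/
import Mathlib

section
/- The average commute time κ_S = (2/(N(N−1))) ∑_{1≤m<n≤N} κ(x_m, x_n) over the slow graph S(N,L) satisfies κ_S ≥ [N(2L+1) − L(L+1)] · 2(N+1)/(3L²(L+1)). -/
open Matrix BigOperators

variable {V : Type*} [Fintype V] [DecidableEq V]

/-- Transition matrix `P = D⁻¹W` of the random walk on a weighted graph. -/
noncomputable def transition (w : Matrix V V ℝ) : Matrix V V ℝ :=
  Matrix.of fun a b => w a b / ∑ c, w a c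

/-- The sub-stochastic matrix obtained by killing the walk at `v`. -/
noncomputable def killAt (P : Matrix V V ℝ) (v : V) : Matrix V V ℝ :=
  Matrix.of fun a b => if b = v then 0 else P a b

/-- Expected hitting time `h(u,v) = ∑_{t ≥ 0} P(T_v > t)` of `v` starting from `u`. -/
noncomputable def hitTime (P : Matrix V V ℝ) (u v : V) : ℝ :=
  if u = v then 0 else ∑' t : ℕ, ((killAt P v ^ t) *ᵥ (fun _ => (1 : ℝ))) u

/-- Commute time `κ(u,v) = h(u,v) + h(v,u)` for the random walk on the weighted graph. -/
noncomputable def commuteTime (w : Matrix V V ℝ) (u v : V) : ℝ :=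
  hitTime (transition w) u v + hitTime (transition w) v u

/-- The graph underlying a weight matrix: `a ~ b` iff `a ≠ b` and the weight is nonzero. -/
def wGraph (w : Matrix V V ℝ) : SimpleGraph V where
  Adj a b := a ≠ b ∧ (w a b ≠ 0 ∨ w b a ≠ 0)
  symm := ⟨fun _ _ h => ⟨h.1.symm, h.2.symm⟩⟩
  loopless := ⟨fun _ h => h.1 rfl⟩

/-- The weight matrix of the slow graph `S(N,L)`: `w_{nm} = w_S` if `|n−m| ≤ L`
(including self-loops) and `0` otherwise. -/
noncomputable def slowWeight (N L : ℕ) (wS : ℝ) : Matrix (Fin N) (Fin N) ℝ :=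
  Matrix.of fun n m => if ((n : ℤ) - (m : ℤ)).natAbs ≤ L then wS else 0


/-!
If a potential `Q` has drift at most `B` under the walk, `P Q ≤ Q + B`, then
`Q v - Q u ≤ B · h(u, v)`: iterating the drift bound along the walk killed at `v` dominates
`Q v - Q` by `B` times the expected number of steps before reaching `v`, which is finite as soon
as every vertex has a step towards `v` of probability bounded below.

On `S(N, L)` the walk moves from `x_k` to a uniform point of the window `|x - k| ≤ L`. For
`Q x = x² + b x` the window average of `Q` exceeds `Q k` by at most
`B = (N - 1 + b) L² (L + 1) / D` with `D = N(2L + 1) - L(L + 1)`, for a suitable shift `b`.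
Using `Q` and its mirror image `x ↦ Q (N - 1 - x)` for the two hitting times gives
`κ(x_m, x_n) ≥ 2 (N - 1 + b)(n - m) / B = 2 D (n - m) / (L² (L + 1))`, and summing over
`m < n` with `∑ (n - m) = N(N - 1)(N + 1)/6` gives the bound.
-/

open Finset Filter Topology

section KilledWalk

variable {M P : Matrix V V ℝ} {v : V}

lemma mulVec_mono_of_nonneg {m n : Type*} [Fintype n] {A : Matrix m n ℝ}
    (hA : ∀ i j, 0 ≤ A i j) : Monotone (A *ᵥ ·) :=
  fun _ _ h i => dotProduct_le_dotProduct_of_nonneg_left h (hA i)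

lemma le_smul_sum_pow_mulVec_one_add {φ : V → ℝ} {c : ℝ} (hM : ∀ i j, 0 ≤ M i j)
    (hφ : φ ≤ c • 1 + M *ᵥ φ) (T : ℕ) :
    φ ≤ c • ∑ t ∈ range T, M ^ t *ᵥ 1 + M ^ T *ᵥ φ := by
  induction T with
  | zero => simp
  | succ T ih =>
    calc φ ≤ c • 1 + M *ᵥ φ := hφ
      _ ≤ c • 1 + M *ᵥ (c • ∑ t ∈ range T, M ^ t *ᵥ 1 + M ^ T *ᵥ φ) := by
        gcongr; exact mulVec_mono_of_nonneg hM ih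
      _ = c • ∑ t ∈ range (T + 1), M ^ t *ᵥ 1 + M ^ (T + 1) *ᵥ φ := by
        simp only [sum_range_succ', mulVec_add, mulVec_smul, mulVec_sum, mulVec_mulVec,
          ← pow_succ', pow_zero, one_mulVec, smul_add]
        abel

theorem le_mul_tsum_pow_mulVec_one {φ : V → ℝ} {c : ℝ} (hM : ∀ i j, 0 ≤ M i j)
    (hφ : φ ≤ c • 1 + M *ᵥ φ) {u : V} (hs : Summable fun t => (M ^ t *ᵥ 1) u) :
    φ u ≤ c * ∑' t, (M ^ t *ᵥ 1) u := by
  obtain ⟨C, hC⟩ := (Set.finite_range φ).bddAbove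
  have htail (T : ℕ) : (M ^ T *ᵥ φ) u ≤ C * (M ^ T *ᵥ 1) u := by
    have hφC : φ ≤ C • 1 := fun x => by simpa using hC (Set.mem_range_self x)
    simpa [mulVec_smul] using mulVec_mono_of_nonneg (pow_apply_nonneg hM T) hφC u
  have hlim :
      Tendsto (fun T => c * ∑ t ∈ range T, (M ^ t *ᵥ 1) u + C * (M ^ T *ᵥ 1) u) atTop
      (𝓝 (c * ∑' t, (M ^ t *ᵥ 1) u + C * 0)) :=
    (hs.hasSum.tendsto_sum_nat.const_mul c).add (hs.tendsto_atTop_zero.const_mul C)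
  refine le_of_tendsto_of_tendsto' tendsto_const_nhds (by simpa using hlim) fun T => ?_
  have := le_smul_sum_pow_mulVec_one_add hM hφ T u
  simp only [Pi.add_apply, Pi.smul_apply, Finset.sum_apply, smul_eq_mul] at this
  linarith [htail T]

theorem summable_pow_mulVec_one (hM : ∀ i j, 0 ≤ M i j) {s : ℕ} {δ : ℝ} (hδ : δ < 1)
    (hs : M ^ s *ᵥ 1 ≤ δ • 1) (u : V) : Summable fun t => (M ^ t *ᵥ 1) u := by
  have hr0 (t : ℕ) : 0 ≤ (M ^ t *ᵥ 1) u :=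
    dotProduct_nonneg_of_nonneg (pow_apply_nonneg hM t u) fun _ => zero_le_one
  have hshift (t : ℕ) : (M ^ (s + t) *ᵥ 1) u ≤ δ * (M ^ t *ᵥ 1) u := by
    have := mulVec_mono_of_nonneg (pow_apply_nonneg hM t) hs u
    simp only at this
    rwa [mulVec_mulVec, ← pow_add, add_comm, mulVec_smul] at this
  -- the partial sums `S T` satisfy `S T ≤ S (s + T) ≤ S s + δ S T`
  refine summable_of_sum_range_le hr0 (c := (∑ t ∈ range s, (M ^ t *ᵥ 1) u) / (1 - δ))
    fun T => (le_div_iff₀ (sub_pos.2 hδ)).2 ?_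
  have hmono : ∑ t ∈ range T, (M ^ t *ᵥ 1) u ≤ ∑ t ∈ range (s + T), (M ^ t *ᵥ 1) u :=
    sum_le_sum_of_subset_of_nonneg (range_subset_range.2 le_add_self) fun t _ _ => hr0 t
  have htail :
      ∑ t ∈ range T, (M ^ (s + t) *ᵥ 1) u ≤ δ * ∑ t ∈ range T, (M ^ t *ᵥ 1) u := by
    rw [mul_sum]; exact sum_le_sum fun t _ => hshift t
  rw [sum_range_add] at hmono
  linarith

lemma mulVec_mono_of_mem_rowStochastic (hP : P ∈ rowStochastic ℝ V) : Monotone (P *ᵥ ·) :=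
  mulVec_mono_of_nonneg fun _ _ => nonneg_of_mem_rowStochastic hP

lemma killAt_nonneg (hP : P ∈ rowStochastic ℝ V) (a b : V) : 0 ≤ killAt P v a b := by
  simp only [killAt, of_apply]
  split_ifs
  exacts [le_rfl, nonneg_of_mem_rowStochastic hP]

lemma killAt_mulVec (P : Matrix V V ℝ) (v : V) (x : V → ℝ) :
    killAt P v *ᵥ x = P *ᵥ Function.update x v 0 := by
  ext a
  simp only [mulVec, dotProduct, killAt, of_apply, Function.update_apply]
  exact sum_congr rfl fun b _ => by split_ifs <;> simp

lemma killAt_pow_mulVec_one_le_one (hP : P ∈ rowStochastic ℝ V) (t : ℕ) :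
    killAt P v ^ t *ᵥ 1 ≤ 1 := by
  induction t with
  | zero => simp
  | succ t ih =>
    rw [pow_succ', ← mulVec_mulVec, killAt_mulVec]
    refine (mulVec_mono_of_mem_rowStochastic hP fun b => ?_).trans_eq
      (one_vecMul_of_mem_rowStochastic hP)
    rcases eq_or_ne b v with rfl | hb
    · simp
    · simpa [hb] using ih b

variable {ε : ℝ} {d : V → ℕ}

lemma killAt_pow_mulVec_one_le_of_escape (hP : P ∈ rowStochastic ℝ V) (hε : 0 < ε)
    (hε1 : ε ≤ 1) (hstep : ∀ u, u ≠ v → ∃ u', ε ≤ P u u' ∧ d u' < d u) (n : ℕ) :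
    ∀ u, u ≠ v → d u < n → (killAt P v ^ n *ᵥ 1) u ≤ 1 - ε ^ n := by
  induction n with
  | zero => intro u _ hd; omega
  | succ n ih =>
    intro u hu hdu
    obtain ⟨u', hPu', hdu'⟩ := hstep u hu
    have hbound :
        Function.update (killAt P v ^ n *ᵥ 1) v 0 ≤ 1 - ε ^ n • Pi.single u' 1 := by
      intro b
      rcases eq_or_ne b v with rfl | hbv
      · simp only [Function.update_self, Pi.sub_apply, Pi.one_apply, Pi.smul_apply,
          smul_eq_mul, sub_nonneg]
        rw [Pi.single_apply]
        split_ifs <;> simp [pow_le_one₀ hε.le hε1]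
      rcases eq_or_ne b u' with rfl | hbu'
      · simpa [hbv] using ih b hbv (by omega)
      · simpa [hbv, hbu'] using killAt_pow_mulVec_one_le_one hP n b
    calc (killAt P v ^ (n + 1) *ᵥ 1) u
        = (P *ᵥ Function.update (killAt P v ^ n *ᵥ 1) v 0) u := by
          rw [pow_succ', ← mulVec_mulVec, killAt_mulVec]
      _ ≤ (P *ᵥ (1 - ε ^ n • Pi.single u' 1)) u :=
          mulVec_mono_of_mem_rowStochastic hP hbound u
      _ = 1 - ε ^ n * P u u' := by
          simp [mulVec_sub, mulVec_smul, one_vecMul_of_mem_rowStochastic hP]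
      _ ≤ 1 - ε ^ (n + 1) := by
          rw [pow_succ]; gcongr

theorem summable_killAt_pow_mulVec_one (hP : P ∈ rowStochastic ℝ V) (hε : 0 < ε)
    (hε1 : ε ≤ 1) (hstep : ∀ u, u ≠ v → ∃ u', ε ≤ P u u' ∧ d u' < d u) (u : V) :
    Summable fun t => (killAt P v ^ t *ᵥ 1) u := by
  obtain ⟨c, hc⟩ : ∃ c, ∀ b, d b < c :=
    ⟨univ.sup d + 1, fun b => Nat.lt_succ_of_le (le_sup (mem_univ b))⟩
  have hεc : 0 ≤ 1 - ε ^ c := sub_nonneg.2 (pow_le_one₀ hε.le hε1)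
  refine summable_pow_mulVec_one (M := killAt P v) (killAt_nonneg hP) (s := c + 1)
    (δ := 1 - ε ^ c) (by linarith [pow_pos hε c]) ?_ u
  have hbound : Function.update (killAt P v ^ c *ᵥ 1) v 0 ≤ (1 - ε ^ c) • 1 := by
    intro b
    rcases eq_or_ne b v with rfl | hbv
    · simpa using hεc
    · simpa [hbv] using killAt_pow_mulVec_one_le_of_escape hP hε hε1 hstep c b hbv (hc b)
  rw [pow_succ', ← mulVec_mulVec, killAt_mulVec]
  refine (mulVec_mono_of_mem_rowStochastic hP hbound).trans_eq ?_
  simp only [mulVec_smul, one_vecMul_of_mem_rowStochastic hP]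

theorem sub_le_mul_hitTime (hP : P ∈ rowStochastic ℝ V) {u : V} (huv : u ≠ v)
    (hs : Summable fun t => (killAt P v ^ t *ᵥ 1) u) {Q : V → ℝ} {B : ℝ}
    (hQ : ∀ x, (P *ᵥ Q) x ≤ Q x + B) : Q v - Q u ≤ B * hitTime P u v := by
  have hφ : Q v • 1 - Q ≤ B • 1 + killAt P v *ᵥ (Q v • 1 - Q) := by
    intro x
    rw [killAt_mulVec, Function.update_eq_self_iff.2 (by simp), mulVec_sub, mulVec_smul,
      one_vecMul_of_mem_rowStochastic hP]
    simp only [Pi.sub_apply, Pi.add_apply, Pi.smul_apply, Pi.one_apply, smul_eq_mul]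
    linarith [hQ x]
  have := le_mul_tsum_pow_mulVec_one (killAt_nonneg hP) hφ hs
  simp only [Pi.sub_apply, Pi.smul_apply, Pi.one_apply, smul_eq_mul, mul_one] at this
  rw [hitTime, if_neg huv]
  exact this

end KilledWalk

section Symmetry

variable {ι : Type*} [Fintype ι] (e : ι ≃ ι)

lemma transition_apply_equiv {w : Matrix ι ι ℝ} (hw : ∀ a b, w (e a) (e b) = w a b)
    (a b : ι) :
    transition w (e a) (e b) = transition w a b := by
  simp only [transition, of_apply, hw]
  rw [← e.sum_comp fun c => w (e a) c]
  simp only [hw]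

lemma mulVec_comp_equiv {P : Matrix ι ι ℝ} (hP : ∀ a b, P (e a) (e b) = P a b)
    (Q : ι → ℝ) :
    P *ᵥ (Q ∘ e) = (P *ᵥ Q) ∘ e := by
  ext a
  simp only [mulVec, dotProduct, Function.comp_apply]
  rw [← e.sum_comp fun x => P (e a) x * Q x]
  simp only [hP]

end Symmetry

section WindowSums

-- `∑_{j = -a}^{c} (j² + β j)`, the excess of `x² + b x` over its value at `k` summed over the
-- window `[k - a, k + c]`, with `β = 2k + b`
noncomputable def windowExcess (a c β : ℝ) : ℝ :=
  (a * (a + 1) * (2 * a + 1) + c * (c + 1) * (2 * c + 1)) / 6 +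
    β * (c * (c + 1) - a * (a + 1)) / 2

lemma sum_range_sub_sq_add_mul (s β : ℝ) (n : ℕ) :
    ∑ i ∈ range n, (((i : ℝ) - s) ^ 2 + β * ((i : ℝ) - s)) =
      n * (n - 1) * (2 * n - 1) / 6 - s * n * (n - 1) + n * s ^ 2 +
        β * (n * (n - 1) / 2 - n * s) := by
  induction n with
  | zero => simp
  | succ n ih => rw [sum_range_succ, ih]; push_cast; ring

lemma sum_Icc_sub_sq_add_mul {k a : ℕ} (hak : a ≤ k) (c : ℕ) (β : ℝ) :
    ∑ i ∈ Icc (k - a) (k + c), (((i : ℝ) - k) ^ 2 + β * ((i : ℝ) - k)) =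
      windowExcess a c β := by
  rw [← Ico_add_one_right_eq_Icc, sum_Ico_eq_sub _ (by omega), sum_range_sub_sq_add_mul,
    sum_range_sub_sq_add_mul, windowExcess]
  push_cast [Nat.cast_sub hak]
  ring

lemma windowExcess_left (a L β : ℝ) :
    windowExcess a L β =
      (a + L + 1) * (L * (L + 1) / 3) + (L - a) * (L + a + 1) * (3 * β - 2 * a - 1) / 6 := by
  unfold windowExcess; ring

lemma windowExcess_right (L c β : ℝ) :
    windowExcess L c β =
      (L + c + 1) * (L * (L + 1) / 3) - (L - c) * (L + c + 1) * (3 * β + 2 * c + 1) / 6 := by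
  unfold windowExcess; ring

lemma sum_range_natCast (n : ℕ) : ∑ i ∈ range n, (i : ℝ) = n * (n - 1) / 2 := by
  induction n with
  | zero => simp
  | succ n ih => rw [sum_range_succ, ih]; push_cast; ring

lemma sum_range_sum_range_ite_sub (N : ℕ) :
    ∑ i ∈ range N, ∑ j ∈ range N, (if i < j then (j : ℝ) - i else 0) =
      N * (N - 1) * (N + 1) / 6 := by
  induction N with
  | zero => simp
  | succ N ih =>
    have hnew : ∑ i ∈ range N, (if i < N then (N : ℝ) - i else 0) = N * (N + 1) / 2 := by
      rw [sum_congr rfl fun i hi => if_pos (mem_range.1 hi), sum_sub_distrib, sum_const,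
        card_range, nsmul_eq_mul, sum_range_natCast]
      ring
    have hzero : ∑ j ∈ range N, (if N < j then (j : ℝ) - N else 0) = 0 :=
      sum_eq_zero fun j hj => if_neg (by simp at hj; omega)
    simp only [sum_range_succ, sum_add_distrib, ih, hnew, hzero, lt_irrefl, if_false]
    push_cast; ring

lemma sum_filter_lt_sub (N : ℕ) :
    ∑ p ∈ univ.filter (fun p : Fin N × Fin N => p.1 < p.2), ((p.2 : ℝ) - p.1) =
      N * (N - 1) * (N + 1) / 6 := by
  rw [sum_filter, Fintype.sum_prod_type, ← sum_range_sum_range_ite_sub]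
  simp only [Fin.lt_def]
  rw [← Fin.sum_univ_eq_sum_range fun i => ∑ j ∈ range N, if i < j then (j : ℝ) - i else 0]
  exact sum_congr rfl fun i _ =>
    Fin.sum_univ_eq_sum_range (fun j => if (i : ℕ) < j then (j : ℝ) - i else 0) N

end WindowSums

section SlowGraph

variable {N L : ℕ} {wS : ℝ}

noncomputable def slowVolume (N L : ℕ) : ℝ := N * (2 * L + 1) - L * (L + 1)

-- `(5 - 4L)/3` is the largest shift for which the windows cut off at `0` have mean excess at
-- most the full-window value `L(L + 1)/3`; that value is within the drift budget only when
-- `3L ≤ N`, and otherwise the shift `1/3` is used.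
noncomputable def slowShift (N L : ℕ) : ℝ := if 3 * L ≤ N then (5 - 4 * L) / 3 else 1 / 3

noncomputable def slowPotential (N L : ℕ) (x : Fin N) : ℝ := (x : ℝ) ^ 2 + slowShift N L * x

lemma slowShift_ge (N L : ℕ) : (5 - 4 * L : ℝ) / 3 ≤ slowShift N L := by
  unfold slowShift
  split_ifs with h
  · exact le_rfl
  · have : (1 : ℝ) ≤ L := by exact_mod_cast (show 1 ≤ L by omega)
    linarith

lemma slowVolume_pos (hNL : 2 * L + 1 ≤ N) : 0 < slowVolume N L := by
  have : (2 * L + 1 : ℝ) ≤ N := by exact_mod_cast hNL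
  unfold slowVolume; nlinarith

lemma slowVolume_mul_bulk_le (hL : 1 ≤ L) :
    slowVolume N L * (L * (L + 1) / 3) ≤ (N - 1 + slowShift N L) * L ^ 2 * (L + 1) := by
  have hL' : (1 : ℝ) ≤ L := by exact_mod_cast hL
  have hLL : (0 : ℝ) ≤ L * (L + 1) := by positivity
  unfold slowVolume slowShift
  split_ifs with h
  · have h3 : (3 * L : ℝ) ≤ N := by exact_mod_cast h
    nlinarith [mul_nonneg (mul_nonneg (sub_nonneg.2 hL') (sub_nonneg.2 h3)) hLL]
  · have hNL : (0 : ℝ) ≤ N + L := by positivity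
    nlinarith [mul_nonneg (mul_nonneg (sub_nonneg.2 hL') hNL) hLL]

lemma slowVolume_mul_windowExcess_le_of_left (hL : 1 ≤ L) (hN3L : N < 3 * L)
    (hNL : 2 * L + 1 ≤ N) {k : ℝ} (hk : 0 ≤ k) :
    slowVolume N L * windowExcess k L (2 * k + 1 / 3) ≤
      (k + L + 1) * ((N - 1 + 1 / 3) * L ^ 2 * (L + 1)) := by
  have hD := slowVolume_pos hNL
  have hL2 : (2 : ℝ) ≤ L := by exact_mod_cast (show 2 ≤ L by omega)
  have hN3L' : (N + 1 : ℝ) ≤ 3 * L := by exact_mod_cast hN3L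
  have hNL' : (2 * L + 1 : ℝ) ≤ N := by exact_mod_cast hNL
  have hkk : 4 * k * (L - k) ≤ L ^ 2 := by nlinarith [sq_nonneg (L - 2 * k)]
  have hpoly : slowVolume N L * (L * (L + 1) / 3 + L ^ 2 / 6) ≤
      (N - 1 + 1 / 3) * L ^ 2 * (L + 1) := by
    unfold slowVolume
    nlinarith [mul_nonneg (by linarith : (0 : ℝ) ≤ 3 * L - 1 - N)
        (by positivity : (0 : ℝ) ≤ L * (L + 2)),
      mul_nonneg (by linarith : (0 : ℝ) ≤ L - 2)
        (by positivity : (0 : ℝ) ≤ L * (3 * L ^ 2 + 4 * L + 1))]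
  rw [windowExcess_left]
  calc slowVolume N L * ((k + L + 1) * (L * (L + 1) / 3) +
        (L - k) * (L + k + 1) * (3 * (2 * k + 1 / 3) - 2 * k - 1) / 6)
      = (k + L + 1) * (slowVolume N L * (L * (L + 1) / 3 + 4 * k * (L - k) / 6)) := by ring
    _ ≤ (k + L + 1) * (slowVolume N L * (L * (L + 1) / 3 + L ^ 2 / 6)) := by gcongr
    _ ≤ (k + L + 1) * ((N - 1 + 1 / 3) * L ^ 2 * (L + 1)) := by gcongr

lemma slowVolume_mul_windowExcess_le {k : ℕ} (hL : 1 ≤ L) (hNL : 2 * L + 1 ≤ N) (hk : k < N) :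
    slowVolume N L *
        windowExcess (min k L : ℕ) (min L (N - 1 - k) : ℕ) (2 * k + slowShift N L) ≤
      ((min k L : ℕ) + (min L (N - 1 - k) : ℕ) + 1 : ℝ) *
        ((N - 1 + slowShift N L) * L ^ 2 * (L + 1)) := by
  have hD := slowVolume_pos hNL
  have hb := slowShift_ge N L
  have hNL' : (2 * L + 1 : ℝ) ≤ N := by exact_mod_cast hNL
  have of_bulk {a c : ℝ}
      (h : windowExcess a c (2 * k + slowShift N L) ≤ (a + c + 1) * (L * (L + 1) / 3))
      (hcnt : 0 ≤ a + c + 1) :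
      slowVolume N L * windowExcess a c (2 * k + slowShift N L) ≤
        (a + c + 1) * ((N - 1 + slowShift N L) * L ^ 2 * (L + 1)) := by
    calc _ ≤ slowVolume N L * ((a + c + 1) * (L * (L + 1) / 3)) := by gcongr
      _ = (a + c + 1) * (slowVolume N L * (L * (L + 1) / 3)) := by ring
      _ ≤ _ := mul_le_mul_of_nonneg_left (slowVolume_mul_bulk_le hL) hcnt
  rcases (by omega : (min k L = k ∧ min L (N - 1 - k) = L ∧ k < L) ∨
      (min k L = L ∧ min L (N - 1 - k) = L) ∨
      (min k L = L ∧ min L (N - 1 - k) = N - 1 - k ∧ N ≤ k + L)) with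
    ⟨ha, hc, hkL⟩ | ⟨ha, hc⟩ | ⟨ha, hc, hkN⟩
  · rw [ha, hc]
    have hkL' : (k : ℝ) + 1 ≤ L := by exact_mod_cast hkL
    by_cases h3L : 3 * L ≤ N
    · refine of_bulk ?_ (by positivity)
      rw [windowExcess_left, slowShift, if_pos h3L]
      nlinarith [mul_nonneg (mul_nonneg (by linarith : (0 : ℝ) ≤ L - k)
        (by positivity : (0 : ℝ) ≤ L + k + 1)) (by linarith : (0 : ℝ) ≤ L - 1 - k)]
    · rw [slowShift, if_neg h3L]
      exact slowVolume_mul_windowExcess_le_of_left hL (by omega) hNL (by positivity)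
  · rw [ha, hc]
    exact of_bulk (by simp [windowExcess_left]) (by positivity)
  · rw [ha, hc]
    refine of_bulk ?_ (by positivity)
    have hkN' : (N : ℝ) ≤ k + L := by exact_mod_cast hkN
    have hkN1 : (k : ℝ) + 1 ≤ N := by exact_mod_cast hk
    push_cast [Nat.cast_sub (by omega : 1 ≤ N), Nat.cast_sub (by omega : k ≤ N - 1)]
    rw [windowExcess_right]
    nlinarith [mul_nonneg (mul_nonneg (by linarith : (0 : ℝ) ≤ L - (N - 1 - k))
      (by linarith : (0 : ℝ) ≤ L + (N - 1 - k) + 1))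
      (by linarith : (0 : ℝ) ≤ 3 * (2 * k + slowShift N L) + 2 * (N - 1 - k) + 1)]

def slowWindow (N L : ℕ) (k : Fin N) : Finset (Fin N) :=
  univ.filter fun x => ((k : ℤ) - (x : ℤ)).natAbs ≤ L

lemma self_mem_slowWindow (k : Fin N) : k ∈ slowWindow N L k := by
  simp [slowWindow]

lemma sum_slowWindow {M : Type*} [AddCommMonoid M] (k : Fin N) (f : ℕ → M) :
    ∑ x ∈ slowWindow N L k, f x =
      ∑ i ∈ Icc ((k : ℕ) - min (k : ℕ) L) (k + min L (N - 1 - k)), f i := by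
  rw [slowWindow, sum_filter,
    Fin.sum_univ_eq_sum_range (fun i => if ((k : ℤ) - i).natAbs ≤ L then f i else 0),
    ← sum_filter]
  congr 1
  ext i
  simp only [mem_filter, mem_range, mem_Icc]
  omega

lemma card_slowWindow (k : Fin N) :
    (slowWindow N L k).card = min (k : ℕ) L + min L (N - 1 - k) + 1 := by
  rw [card_eq_sum_ones, sum_slowWindow k fun _ => 1, ← card_eq_sum_ones, Nat.card_Icc]
  omega

lemma slowWeight_apply (k x : Fin N) :
    slowWeight N L wS k x = if x ∈ slowWindow N L k then wS else 0 := by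
  simp [slowWeight, slowWindow]

lemma slowWeight_rev (a b : Fin N) :
    slowWeight N L wS (Fin.revPerm a) (Fin.revPerm b) = slowWeight N L wS a b := by
  have := a.isLt; have := b.isLt
  simp only [slowWeight, of_apply, Fin.revPerm_apply, Fin.val_rev]
  simp only [show ((N - (a + 1) : ℕ) : ℤ) - (N - (b + 1) : ℕ) = -((a : ℤ) - b) by omega,
    Int.natAbs_neg]

lemma transition_slowWeight_apply (hw : wS ≠ 0) (k x : Fin N) :
    transition (slowWeight N L wS) k x =
      if x ∈ slowWindow N L k then ((slowWindow N L k).card : ℝ)⁻¹ else 0 := by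
  have hcard : ((slowWindow N L k).card : ℝ) ≠ 0 :=
    Nat.cast_ne_zero.2 (card_ne_zero_of_mem (self_mem_slowWindow k))
  simp only [transition, of_apply, slowWeight_apply, sum_ite_mem, univ_inter, sum_const,
    nsmul_eq_mul]
  split_ifs
  · field_simp
  · simp

lemma transition_slowWeight_mulVec (hw : wS ≠ 0) (f : Fin N → ℝ) (k : Fin N) :
    (transition (slowWeight N L wS) *ᵥ f) k =
      ((slowWindow N L k).card : ℝ)⁻¹ * ∑ x ∈ slowWindow N L k, f x := by
  simp only [mulVec, dotProduct, transition_slowWeight_apply hw, ite_mul, zero_mul, sum_ite_mem,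
    univ_inter, mul_sum]

lemma transition_slowWeight_mem_rowStochastic (hw : wS ≠ 0) :
    transition (slowWeight N L wS) ∈ rowStochastic ℝ (Fin N) := by
  refine mem_rowStochastic.2 ⟨fun k x => ?_, funext fun k => ?_⟩
  · rw [transition_slowWeight_apply hw]; split_ifs <;> positivity
  · have hcard : ((slowWindow N L k).card : ℝ) ≠ 0 :=
      Nat.cast_ne_zero.2 (card_ne_zero_of_mem (self_mem_slowWindow k))
    simp [transition_slowWeight_mulVec hw, hcard]

lemma exists_transition_slowWeight_ge (hL : 1 ≤ L) (hw : wS ≠ 0) {u v : Fin N} (huv : u ≠ v) :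
    ∃ u', (N : ℝ)⁻¹ ≤ transition (slowWeight N L wS) u u' ∧
      ((u' : ℤ) - v).natAbs < ((u : ℤ) - v).natAbs := by
  have hval : (u : ℕ) ≠ v := Fin.val_ne_of_ne huv
  obtain ⟨u', hstep, hcloser⟩ : ∃ u' : Fin N, ((u : ℤ) - u').natAbs = 1 ∧
      ((u' : ℤ) - v).natAbs < ((u : ℤ) - v).natAbs := by
    rcases Nat.lt_or_gt_of_ne hval with h | h
    · exact ⟨⟨u + 1, by omega⟩, by dsimp only; omega, by dsimp only; omega⟩
    · exact ⟨⟨u - 1, by omega⟩, by dsimp only; omega, by dsimp only; omega⟩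
  refine ⟨u', ?_, hcloser⟩
  have hmem : u' ∈ slowWindow N L u := by simp [slowWindow]; omega
  rw [transition_slowWeight_apply hw, if_pos hmem]
  gcongr
  · exact_mod_cast card_pos.2 ⟨u', hmem⟩
  · simpa using card_le_univ (slowWindow N L u)

lemma transition_slowWeight_mulVec_slowPotential_le (hL : 1 ≤ L) (hNL : 2 * L + 1 ≤ N)
    (hw : wS ≠ 0) (k : Fin N) :
    (transition (slowWeight N L wS) *ᵥ slowPotential N L) k ≤
      slowPotential N L k + (N - 1 + slowShift N L) * L ^ 2 * (L + 1) / slowVolume N L := by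
  have hsum : ∑ x ∈ slowWindow N L k, slowPotential N L x =
      (slowWindow N L k).card * slowPotential N L k +
        windowExcess (min (k : ℕ) L : ℕ) (min L (N - 1 - k) : ℕ) (2 * k + slowShift N L) := by
    rw [← sum_Icc_sub_sq_add_mul (min_le_left _ _), ← sum_slowWindow k fun i : ℕ =>
      ((i : ℝ) - k) ^ 2 + (2 * k + slowShift N L) * ((i : ℝ) - k), ← nsmul_eq_mul,
      ← sum_const, ← sum_add_distrib]
    exact sum_congr rfl fun x _ => by unfold slowPotential; ring
  have hcard : ((slowWindow N L k).card : ℝ) =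
      (min (k : ℕ) L : ℕ) + (min L (N - 1 - k) : ℕ) + 1 := by
    exact_mod_cast card_slowWindow k
  have hcnt : (0 : ℝ) < (min (k : ℕ) L : ℕ) + (min L (N - 1 - k) : ℕ) + 1 := by positivity
  rw [transition_slowWeight_mulVec hw, hsum, hcard, mul_add, inv_mul_cancel_left₀ hcnt.ne',
    add_le_add_iff_left, inv_mul_le_iff₀ hcnt, mul_div_assoc', le_div_iff₀ (slowVolume_pos hNL),
    mul_comm _ (slowVolume N L)]
  exact slowVolume_mul_windowExcess_le hL hNL k.isLt

lemma slowPotential_sub_add_rev_sub (m n : Fin N) :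
    slowPotential N L n - slowPotential N L m +
        (slowPotential N L (Fin.revPerm m) - slowPotential N L (Fin.revPerm n)) =
      2 * (N - 1 + slowShift N L) * ((n : ℝ) - m) := by
  have := m.isLt; have := n.isLt
  simp only [slowPotential, Fin.revPerm_apply, Fin.val_rev]
  push_cast [Nat.cast_sub (by omega : (m : ℕ) + 1 ≤ N),
    Nat.cast_sub (by omega : (n : ℕ) + 1 ≤ N)]
  ring

theorem le_commuteTime_slowWeight (hL : 1 ≤ L) (hNL : 2 * L + 1 ≤ N) (hw : wS ≠ 0)
    {m n : Fin N} (hmn : m < n) :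
    2 * slowVolume N L / (L ^ 2 * (L + 1)) * ((n : ℝ) - m) ≤
      commuteTime (slowWeight N L wS) m n := by
  have hP := transition_slowWeight_mem_rowStochastic (N := N) (L := L) hw
  have hN : (1 : ℝ) ≤ N := by exact_mod_cast Fin.pos m
  have hs (u v : Fin N) :
      Summable fun t => (killAt (transition (slowWeight N L wS)) v ^ t *ᵥ 1) u :=
    summable_killAt_pow_mulVec_one hP (by positivity) (inv_le_one_of_one_le₀ hN)
      (fun _ hu => exists_transition_slowWeight_ge hL hw hu) u
  have hdrift := transition_slowWeight_mulVec_slowPotential_le hL hNL hw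
  have hforth := sub_le_mul_hitTime hP hmn.ne (hs m n) hdrift
  have hback := sub_le_mul_hitTime hP hmn.ne' (hs n m) (Q := slowPotential N L ∘ Fin.revPerm)
    fun k => by rw [mulVec_comp_equiv _ (transition_apply_equiv _ slowWeight_rev)]; exact hdrift _
  simp only [Function.comp_apply] at hback
  have hD := slowVolume_pos hNL
  have hb : 0 < N - 1 + slowShift N L := by
    have : (2 * L + 1 : ℝ) ≤ N := by exact_mod_cast hNL
    linarith [slowShift_ge N L]
  have hsum : 2 * (N - 1 + slowShift N L) * ((n : ℝ) - m) * slowVolume N L ≤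
      (N - 1 + slowShift N L) * L ^ 2 * (L + 1) * commuteTime (slowWeight N L wS) m n := by
    rw [← le_div_iff₀ hD, mul_div_right_comm, ← slowPotential_sub_add_rev_sub, commuteTime,
      mul_add]
    linarith
  rw [div_mul_eq_mul_div, div_le_iff₀ (by positivity)]
  refine le_of_mul_le_mul_left ?_ hb
  linear_combination hsum

end SlowGraph

/-- The average commute time `κ_S = (2/(N(N−1))) ∑_{m<n} κ(x_m,x_n)` over the slow
graph `S(N,L)` satisfies `κ_S ≥ [N(2L+1) − L(L+1)] · 2(N+1)/(3L²(L+1))`. -/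
theorem slow_graph_average_commute_time_lower_bound (N L : ℕ) (hL : 1 ≤ L)
    (hNL : 2 * L + 1 ≤ N) (wS : ℝ) (hw : 0 < wS) :
    ((N : ℝ) * (2 * (L : ℝ) + 1) - (L : ℝ) * ((L : ℝ) + 1))
        * (2 * ((N : ℝ) + 1) / (3 * (L : ℝ) ^ 2 * ((L : ℝ) + 1)))
      ≤ (2 / ((N : ℝ) * ((N : ℝ) - 1))) *
          ∑ p ∈ Finset.univ.filter (fun p : Fin N × Fin N => p.1 < p.2),
            commuteTime (slowWeight N L wS) p.1 p.2 := by
  have hpairs : 2 * slowVolume N L / (L ^ 2 * (L + 1)) * (N * (N - 1) * (N + 1) / 6) ≤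
      ∑ p ∈ univ.filter (fun p : Fin N × Fin N => p.1 < p.2),
        commuteTime (slowWeight N L wS) p.1 p.2 := by
    rw [← sum_filter_lt_sub, mul_sum]
    exact sum_le_sum fun p hp => le_commuteTime_slowWeight hL hNL hw.ne' (mem_filter.1 hp).2
  have hN : (3 : ℝ) ≤ N := by exact_mod_cast (show 3 ≤ N by omega)
  have hN1 : (N : ℝ) - 1 ≠ 0 := by linarith
  calc slowVolume N L * (2 * (N + 1) / (3 * L ^ 2 * (L + 1)))
      = 2 / (N * (N - 1)) *
          (2 * slowVolume N L / (L ^ 2 * (L + 1)) * (N * (N - 1) * (N + 1) / 6)) := by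
        field_simp
        ring
    _ ≤ _ := mul_le_mul_of_nonneg_left hpairs (div_nonneg zero_le_two (by nlinarith))
end

section
/- For a connected weighted graph, the commute time admits the spectral representation κ(x_n, x_m) = ∑_{k=2}^{N} (1/(1−λ_k)) · (φ_k(x_n)/√π_n − φ_k(x_m)/√π_m)², where λ_1 = 1 > λ_2 ≥ ... ≥ λ_N > −1 are the eigenvalues of D^{−1/2} W D^{−1/2} with orthonormal eigenvectors φ_k, and π is the stationary distribution of the random walk. -/
open Matrix BigOperators

variable {V : Type*} [Fintype V] [DecidableEq V]

/-!
Fix the target `v`. The hitting time `h(·, v)` is the only function vanishing at `v` with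
`h = 1 + P h` off `v`: on a connected graph the walk killed at `v` survives with geometrically
decaying probability, so iterating the equation shows that any solution equals the series
`∑ₜ ℙ(T_v > t)` defining `h`. With `ψ_k = φ_k / √π` the right eigenvectors of `P = D⁻¹W`, the
function `u ↦ ∑_{k ≥ 2} ψ_k(v) (ψ_k(v) − ψ_k(u)) / (1 − λ_k)` solves this system, because
completeness of the orthonormal basis `φ_k` together with `ψ_1 = 1` gives
`∑_{k ≥ 2} ψ_k(u) ψ_k(v) = −1` for `u ≠ v`. Adding the two hitting times completes the square.
-/

open Finset Filter Topology

section Survival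

variable {X : Type*} [Fintype X] [DecidableEq X]

/-- `survival P v t u` is the probability that the walk from `u` avoids `v` at times `1, …, t`;
masking it to `0` at `v` gives `ℙ_u(T_v > t)`. -/
noncomputable def survival (P : Matrix X X ℝ) (v : X) (t : ℕ) : X → ℝ :=
  (killAt P v ^ t) *ᵥ 1

variable {P : Matrix X X ℝ} {v : X}

lemma killAt_mulVec_apply (x : X → ℝ) (u : X) :
    (killAt P v *ᵥ x) u = ∑ c, P u c * Function.update x v 0 c := by
  simp only [mulVec, dotProduct, killAt, of_apply, Function.update_apply]
  exact sum_congr rfl fun c _ => by split_ifs <;> simp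

lemma killAt_mulVec_of_apply_eq_zero {x : X → ℝ} (hx : x v = 0) :
    killAt P v *ᵥ x = P *ᵥ x := by
  ext u
  rw [killAt_mulVec_apply, Function.update_eq_self_iff.mpr hx.symm]
  rfl

lemma killAt_mulVec_congr {x y : X → ℝ} (h : ∀ c, c ≠ v → x c = y c) :
    killAt P v *ᵥ x = killAt P v *ᵥ y := by
  ext u
  simp only [killAt_mulVec_apply, Function.update_apply]
  exact sum_congr rfl fun c _ => by split_ifs with hc <;> simp [h c, hc]

lemma killAt_pow_mulVec_mono (hP : P ∈ rowStochastic ℝ X) (t : ℕ) {x y : X → ℝ}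
    (hxy : x ≤ y) : killAt P v ^ t *ᵥ x ≤ killAt P v ^ t *ᵥ y := by
  induction t with
  | zero => simpa using hxy
  | succ t ih =>
    intro u
    simp only [pow_succ', ← mulVec_mulVec, killAt_mulVec_apply, Function.update_apply]
    refine sum_le_sum fun c _ => mul_le_mul_of_nonneg_left ?_ (hP.1 u c)
    split_ifs
    · rfl
    · exact ih c

lemma survival_succ (t : ℕ) : survival P v (t + 1) = killAt P v *ᵥ survival P v t := by
  rw [survival, pow_succ', ← mulVec_mulVec, survival]

lemma survival_nonneg (hP : P ∈ rowStochastic ℝ X) (t : ℕ) : 0 ≤ survival P v t := by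
  simpa [survival] using killAt_pow_mulVec_mono (v := v) hP t (zero_le_one' (X → ℝ))

lemma survival_le_one (hP : P ∈ rowStochastic ℝ X) (t : ℕ) : survival P v t ≤ 1 := by
  induction t with
  | zero => simp [survival]
  | succ t ih =>
    intro u
    rw [survival_succ, killAt_mulVec_apply, Pi.one_apply, ← sum_row_of_mem_rowStochastic hP u]
    refine sum_le_sum fun c _ => mul_le_of_le_one_right (hP.1 u c) ?_
    rw [Function.update_apply]
    split_ifs
    · exact zero_le_one
    · exact ih c

lemma survival_add_le (hP : P ∈ rowStochastic ℝ X) {T : ℕ} {r : ℝ}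
    (hr : survival P v T ≤ r • 1) (s : ℕ) :
    survival P v (s + T) ≤ r • survival P v s := by
  calc survival P v (s + T) = killAt P v ^ s *ᵥ survival P v T := by
        rw [survival, survival, pow_add, mulVec_mulVec]
    _ ≤ killAt P v ^ s *ᵥ (r • 1) := killAt_pow_mulVec_mono hP s hr
    _ = r • survival P v s := by rw [mulVec_smul, survival]

lemma survival_add_mul_le (hP : P ∈ rowStochastic ℝ X) {T : ℕ} {r : ℝ} (hr0 : 0 ≤ r)
    (hr : survival P v T ≤ r • 1) (s k : ℕ) (u : X) :
    survival P v (s + k * T) u ≤ r ^ k := by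
  induction k with
  | zero => simpa using survival_le_one hP s u
  | succ k ih =>
    calc survival P v (s + (k + 1) * T) u = survival P v (s + k * T + T) u := by ring_nf
      _ ≤ r * survival P v (s + k * T) u := survival_add_le hP hr _ u
      _ ≤ r * r ^ k := mul_le_mul_of_nonneg_left ih hr0
      _ = r ^ (k + 1) := (pow_succ' r k).symm

lemma tendsto_survival_of_le (hP : P ∈ rowStochastic ℝ X) {T : ℕ} (hT : T ≠ 0) {r : ℝ}
    (hr0 : 0 ≤ r) (hr1 : r < 1) (hr : survival P v T ≤ r • 1) (u : X) :
    Tendsto (fun t => survival P v t u) atTop (𝓝 0) := by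
  have hpow : Tendsto (fun t => r ^ (t / T)) atTop (𝓝 0) :=
    (tendsto_pow_atTop_nhds_zero_of_lt_one hr0 hr1).comp (Nat.tendsto_div_const_atTop hT)
  refine tendsto_of_tendsto_of_tendsto_of_le_of_le tendsto_const_nhds hpow
    (fun t => survival_nonneg hP t u) fun t => ?_
  simpa only [Nat.mod_add_div'] using survival_add_mul_le hP hr0 hr (t % T) (t / T) u

lemma update_survival_lt_one_of_walk (hP : P ∈ rowStochastic ℝ X) {G : SimpleGraph X}
    (hadj : ∀ a b, G.Adj a b → 0 < P a b) {u : X} (p : G.Walk u v) {t : ℕ}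
    (hp : p.length ≤ t) : Function.update (survival P v t) v 0 u < 1 := by
  induction p generalizing t with
  | nil => simp
  | @cons u b _ hub p ih =>
    simp only [SimpleGraph.Walk.length_cons] at hp
    obtain ⟨s, rfl⟩ : ∃ s, t = s + 1 := ⟨t - 1, by omega⟩
    rw [Function.update_apply]
    split_ifs
    · exact zero_lt_one
    rw [survival_succ, killAt_mulVec_apply, ← sum_row_of_mem_rowStochastic hP u]
    refine sum_lt_sum (fun c _ => mul_le_of_le_one_right (hP.1 u c) ?_)
      ⟨b, mem_univ b, mul_lt_of_lt_one_right (hadj u b hub) (ih (by omega))⟩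
    rw [Function.update_apply]
    split_ifs
    · exact zero_le_one
    · exact survival_le_one hP s c

lemma exists_survival_card_succ_le (hP : P ∈ rowStochastic ℝ X) {G : SimpleGraph X}
    (hG : G.Preconnected) (hadj : ∀ a b, G.Adj a b → 0 < P a b) :
    ∃ r : ℝ, 0 ≤ r ∧ r < 1 ∧ survival P v (Fintype.card X + 1) ≤ r • 1 := by
  set x := Function.update (survival P v (Fintype.card X)) v 0
  have hx : ∀ c, x c < 1 := fun c =>
    update_survival_lt_one_of_walk hP hadj (hG c v).some.toPath.1
      (hG c v).some.toPath.2.length_lt.le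
  have : Nonempty X := ⟨v⟩
  obtain ⟨c₀, hc₀⟩ := Finite.exists_max x
  refine ⟨x c₀, le_trans ?_ (hc₀ v), hx c₀, fun u => ?_⟩
  · simp [x]
  rw [survival_succ, killAt_mulVec_apply]
  calc ∑ c, P u c * x c ≤ ∑ c, P u c * x c₀ :=
        sum_le_sum fun c _ => mul_le_mul_of_nonneg_left (hc₀ c) (hP.1 u c)
    _ = (x c₀ • 1 : X → ℝ) u := by
        rw [← sum_mul, sum_row_of_mem_rowStochastic hP u, one_mul, Pi.smul_apply, Pi.one_apply,
          smul_eq_mul, mul_one]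

lemma tendsto_survival (hP : P ∈ rowStochastic ℝ X) {G : SimpleGraph X}
    (hG : G.Preconnected) (hadj : ∀ a b, G.Adj a b → 0 < P a b) (u : X) :
    Tendsto (fun t => survival P v t u) atTop (𝓝 0) := by
  obtain ⟨r, hr0, hr1, hr⟩ := exists_survival_card_succ_le (v := v) hP hG hadj
  exact tendsto_survival_of_le hP (Nat.add_one_ne_zero _) hr0 hr1 hr u

lemma eq_sum_range_add_pow_mulVec {R : Type*} [Semiring R] {A : Matrix X X R} {b x : X → R}
    (hx : x = b + A *ᵥ x) (t : ℕ) :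
    x = ∑ s ∈ range t, A ^ s *ᵥ b + A ^ t *ᵥ x := by
  induction t with
  | zero => simp
  | succ t ih =>
    calc x = ∑ s ∈ range t, A ^ s *ᵥ b + A ^ t *ᵥ x := ih
      _ = ∑ s ∈ range t, A ^ s *ᵥ b + A ^ t *ᵥ (b + A *ᵥ x) := by rw [← hx]
      _ = ∑ s ∈ range (t + 1), A ^ s *ᵥ b + A ^ (t + 1) *ᵥ x := by
        rw [mulVec_add, mulVec_mulVec, ← pow_succ, sum_range_succ, add_assoc]

variable {G : SimpleGraph X}

lemma tendsto_killAt_pow_mulVec (hP : P ∈ rowStochastic ℝ X) (hG : G.Preconnected)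
    (hadj : ∀ a b, G.Adj a b → 0 < P a b) (x : X → ℝ) (u : X) :
    Tendsto (fun t => (killAt P v ^ t *ᵥ x) u) atTop (𝓝 0) := by
  have : Nonempty X := ⟨v⟩
  obtain ⟨c₀, hc₀⟩ := Finite.exists_max fun b => |x b|
  set C := |x c₀|
  have hsurv := tendsto_survival (v := v) hP hG hadj u
  refine tendsto_of_tendsto_of_tendsto_of_le_of_le (by simpa using (hsurv.const_mul C).neg)
    (by simpa using hsurv.const_mul C) (fun t => ?_) fun t => ?_
  · simpa [survival, mulVec_smul, mulVec_neg] using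
      killAt_pow_mulVec_mono (v := v) hP t (x := -C • 1) (fun b => by
        simpa using neg_le_of_abs_le (hc₀ b)) u
  · simpa [survival, mulVec_smul] using
      killAt_pow_mulVec_mono (v := v) hP t (y := C • 1) (fun b => by
        simpa using le_of_abs_le (hc₀ b)) u

lemma hasSum_survival_of_eq_one_add (hP : P ∈ rowStochastic ℝ X) (hG : G.Preconnected)
    (hadj : ∀ a b, G.Adj a b → 0 < P a b) {h : X → ℝ} (hh : h = 1 + killAt P v *ᵥ h)
    (u : X) : HasSum (fun t => survival P v t u) (h u) := by
  rw [hasSum_iff_tendsto_nat_of_nonneg (fun t => survival_nonneg hP t u)]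
  have hpartial : ∀ t, ∑ s ∈ range t, survival P v s u = h u - (killAt P v ^ t *ᵥ h) u := by
    intro t
    have := congrFun (eq_sum_range_add_pow_mulVec hh t) u
    simp only [Pi.add_apply, Finset.sum_apply] at this
    simp only [survival]
    linarith
  simp_rw [hpartial]
  simpa using tendsto_const_nhds.sub (tendsto_killAt_pow_mulVec hP hG hadj h u)

theorem hitTime_eq_of_first_step (hP : P ∈ rowStochastic ℝ X) (hG : G.Preconnected)
    (hadj : ∀ a b, G.Adj a b → 0 < P a b) {g : X → ℝ} (hgv : g v = 0)
    (hg : ∀ u, u ≠ v → g u = 1 + ∑ b, P u b * g b) (u : X) : hitTime P u v = g u := by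
  rcases eq_or_ne u v with rfl | hu
  · simp [hitTime, hgv]
  set h := 1 + P *ᵥ g
  have hgh : ∀ c, c ≠ v → g c = h c := hg
  have hfix : h = 1 + killAt P v *ᵥ h := by
    rw [← killAt_mulVec_congr hgh, killAt_mulVec_of_apply_eq_zero hgv]
  rw [hitTime, if_neg hu, hgh u hu]
  exact (hasSum_survival_of_eq_one_add hP hG hadj hfix u).tsum_eq

end Survival

section Spectral

variable {ι X : Type*}

noncomputable def spectralHitTime (K : Finset ι) (lam : ι → ℝ) (ψ : ι → X → ℝ) (u v : X) : ℝ :=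
  ∑ k ∈ K, ψ k v * (ψ k v - ψ k u) / (1 - lam k)

lemma spectralHitTime_self (K : Finset ι) (lam : ι → ℝ) (ψ : ι → X → ℝ) (v : X) :
    spectralHitTime K lam ψ v v = 0 := by
  simp [spectralHitTime]

lemma spectralHitTime_add_swap (K : Finset ι) (lam : ι → ℝ) (ψ : ι → X → ℝ) (u v : X) :
    spectralHitTime K lam ψ u v + spectralHitTime K lam ψ v u
      = ∑ k ∈ K, 1 / (1 - lam k) * (ψ k u - ψ k v) ^ 2 := by
  rw [spectralHitTime, spectralHitTime, ← sum_add_distrib]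
  exact sum_congr rfl fun k _ => by ring

lemma spectralHitTime_eq_one_add [Fintype X] {P : Matrix X X ℝ} (hP : ∀ a, ∑ b, P a b = 1)
    {K : Finset ι} {lam : ι → ℝ} {ψ : ι → X → ℝ} (heig : ∀ k ∈ K, P *ᵥ ψ k = lam k • ψ k)
    (hlam : ∀ k ∈ K, lam k ≠ 1) {u v : X} (hK : ∑ k ∈ K, ψ k u * ψ k v = -1) :
    spectralHitTime K lam ψ u v = 1 + ∑ b, P u b * spectralHitTime K lam ψ b v := by
  have hmode : ∀ k ∈ K, ∑ b, P u b * (ψ k v * (ψ k v - ψ k b) / (1 - lam k))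
      = ψ k v * (ψ k v - lam k * ψ k u) / (1 - lam k) := by
    intro k hk
    have hu : ∑ b, P u b * ψ k b = lam k * ψ k u := congrFun (heig k hk) u
    calc ∑ b, P u b * (ψ k v * (ψ k v - ψ k b) / (1 - lam k))
        = ψ k v * ((∑ b, P u b) * ψ k v - ∑ b, P u b * ψ k b) / (1 - lam k) := by
          rw [sum_mul, ← sum_sub_distrib, mul_sum, sum_div]
          exact sum_congr rfl fun b _ => by ring
      _ = ψ k v * (ψ k v - lam k * ψ k u) / (1 - lam k) := by rw [hP u, one_mul, hu]
  have hstep : ∑ b, P u b * spectralHitTime K lam ψ b v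
      = ∑ k ∈ K, ψ k v * (ψ k v - lam k * ψ k u) / (1 - lam k) := by
    simp only [spectralHitTime, mul_sum]
    rw [sum_comm]
    exact sum_congr rfl hmode
  have hdiff : spectralHitTime K lam ψ u v - ∑ k ∈ K, ψ k v * (ψ k v - lam k * ψ k u) / (1 - lam k)
      = -∑ k ∈ K, ψ k u * ψ k v := by
    rw [spectralHitTime, ← sum_sub_distrib, ← sum_neg_distrib]
    refine sum_congr rfl fun k hk => ?_
    have : 1 - lam k ≠ 0 := sub_ne_zero.mpr (hlam k hk).symm
    field_simp
    ring
  rw [hstep]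
  linarith

lemma sum_mul_eq_ite_of_orthonormal [Fintype X] [DecidableEq X] {φ : X → X → ℝ}
    (horth : ∀ k l, ∑ i, φ k i * φ l i = if k = l then (1 : ℝ) else 0) (a b : X) :
    ∑ k, φ k a * φ k b = if a = b then (1 : ℝ) else 0 := by
  have hrows : of φ * (of φ)ᵀ = 1 := by
    ext k l
    simpa [mul_apply, one_apply] using horth k l
  simpa [mul_apply, one_apply] using congrArg (fun M => M a b) (mul_eq_one_comm.mp hrows)

lemma sum_sdiff_mul_eq_neg_one_of_orthonormal [Fintype X] [DecidableEq X] {π : X → ℝ}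
    (hπ : ∀ a, 0 < π a) {φ : X → X → ℝ}
    (horth : ∀ k l, ∑ i, φ k i * φ l i = if k = l then (1 : ℝ) else 0) {k₀ : X}
    (hφ : ∀ a, φ k₀ a = √(π a)) {u v : X} (huv : u ≠ v) :
    ∑ k ∈ univ \ {k₀}, φ k u / √(π u) * (φ k v / √(π v)) = -1 := by
  have hall : ∑ k, φ k u / √(π u) * (φ k v / √(π v)) = 0 := by
    have h := sum_mul_eq_ite_of_orthonormal horth u v
    rw [if_neg huv] at h
    simp only [div_mul_div_comm, ← sum_div, h, zero_div]
  rw [sum_sdiff_eq_sub (subset_univ _), hall, sum_singleton, hφ, hφ,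
    div_self (Real.sqrt_pos.mpr (hπ u)).ne', div_self (Real.sqrt_pos.mpr (hπ v)).ne']
  ring

end Spectral

section WeightedGraph

variable {X : Type*} [Fintype X] {w : Matrix X X ℝ}

noncomputable def normalizedAdjacency (w : Matrix X X ℝ) : Matrix X X ℝ :=
  of fun a b => w a b / (√(∑ c, w a c) * √(∑ c, w b c))

lemma transition_mem_rowStochastic [DecidableEq X] (hnn : ∀ a b, 0 ≤ w a b)
    (hdeg : ∀ a, 0 < ∑ b, w a b) :
    transition w ∈ rowStochastic ℝ X := by
  refine mem_rowStochastic_iff_sum.mpr ⟨fun a b => div_nonneg (hnn a b) (hdeg a).le, fun a => ?_⟩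
  simp only [transition, of_apply, ← sum_div, div_self (hdeg a).ne']

lemma transition_pos_of_adj (hsym : ∀ a b, w a b = w b a) (hnn : ∀ a b, 0 ≤ w a b)
    (hdeg : ∀ a, 0 < ∑ b, w a b) {a b : X} (h : (wGraph w).Adj a b) : 0 < transition w a b := by
  have hw : w a b ≠ 0 := h.2.elim id fun h' => hsym a b ▸ h'
  exact div_pos ((hnn a b).lt_of_ne hw.symm) (hdeg a)

lemma transition_mulVec_div_sqrt (hdeg : ∀ a, 0 < ∑ b, w a b) {π : X → ℝ}
    (hπ : ∀ a, π a = (∑ b, w a b) / ∑ a, ∑ b, w a b) {x : X → ℝ} {μ : ℝ}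
    (hx : normalizedAdjacency w *ᵥ x = μ • x) :
    transition w *ᵥ (fun a => x a / √(π a)) = μ • fun a => x a / √(π a) := by
  ext a
  have hvol : 0 < √(∑ a, ∑ b, w a b) :=
    Real.sqrt_pos.mpr (sum_pos (fun a _ => hdeg a) ⟨a, mem_univ a⟩)
  have hd : ∀ a, 0 < √(∑ b, w a b) := fun a => Real.sqrt_pos.mpr (hdeg a)
  have hxa : ∑ b, w a b / (√(∑ c, w a c) * √(∑ c, w b c)) * x b = μ * x a := congrFun hx a
  simp only [mulVec, dotProduct, transition, of_apply, Pi.smul_apply, smul_eq_mul, hπ,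
    Real.sqrt_div (hdeg _).le]
  calc ∑ b, w a b / (∑ c, w a c) * (x b / (√(∑ c, w b c) / √(∑ a, ∑ b, w a b)))
      = √(∑ a, ∑ b, w a b) / √(∑ c, w a c) *
          ∑ b, w a b / (√(∑ c, w a c) * √(∑ c, w b c)) * x b := by
        rw [mul_sum]
        refine sum_congr rfl fun b _ => ?_
        field_simp [(hd a).ne', (hd b).ne', hvol.ne', (hdeg a).ne']
        rw [Real.sq_sqrt (hdeg a).le]
        ring
    _ = μ * (x a / (√(∑ c, w a c) / √(∑ a, ∑ b, w a b))) := by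
        rw [hxa]
        field_simp [(hd a).ne', hvol.ne']

end WeightedGraph

/-- **Spectral representation of the commute time.**  For a connected weighted graph,
`κ(x_n,x_m) = ∑_{k=2}^N (1/(1−λ_k)) (φ_k(x_n)/√π_n − φ_k(x_m)/√π_m)²`, where
`1 = λ_1 > λ_2 ≥ … ≥ λ_N > −1` are the eigenvalues of `D^{−1/2} W D^{−1/2}` with
orthonormal eigenvectors `φ_k`, `φ_1 = √π`, and `π` is the stationary distribution. -/
theorem commute_time_spectral_representation (N : ℕ) (hN : 2 ≤ N)
    (w : Matrix (Fin N) (Fin N) ℝ)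
    (hsym : ∀ a b, w a b = w b a) (hnn : ∀ a b, 0 ≤ w a b)
    (hdeg : ∀ a, 0 < ∑ b, w a b) (hconn : (wGraph w).Connected)
    (π : Fin N → ℝ) (hπ : ∀ n, π n = (∑ b, w n b) / ∑ a, ∑ b, w a b)
    (lam : Fin N → ℝ) (φ : Fin N → Fin N → ℝ)
    (heig : ∀ k, (Matrix.of fun a b =>
        w a b / (Real.sqrt (∑ c, w a c) * Real.sqrt (∑ c, w b c)) :
          Matrix (Fin N) (Fin N) ℝ).mulVec (φ k) = lam k • φ k)
    (horth : ∀ k l, ∑ i, φ k i * φ l i = if k = l then (1 : ℝ) else 0)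
    (hlamlt : ∀ k : Fin N, k ≠ ⟨0, by omega⟩ → lam k < 1)
    (hφ1 : ∀ n, φ ⟨0, by omega⟩ n = Real.sqrt (π n)) :
    ∀ n m : Fin N,
      commuteTime w n m
        = ∑ k ∈ Finset.univ \ {(⟨0, by omega⟩ : Fin N)},
            (1 / (1 - lam k)) *
              (φ k n / Real.sqrt (π n) - φ k m / Real.sqrt (π m)) ^ 2 := by
  intro n m
  set ψ : Fin N → Fin N → ℝ := fun k a => φ k a / √(π a)
  have hπpos : ∀ a, 0 < π a := fun a => by
    rw [hπ]; exact div_pos (hdeg a) (sum_pos (fun a _ => hdeg a) ⟨a, mem_univ a⟩)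
  have hP := transition_mem_rowStochastic hnn hdeg
  have hhit : ∀ u v,
      hitTime (transition w) u v = spectralHitTime (univ \ {⟨0, by omega⟩}) lam ψ u v :=
    fun u v => hitTime_eq_of_first_step (g := fun u => spectralHitTime _ lam ψ u v) hP
      hconn.preconnected (fun _ _ => transition_pos_of_adj hsym hnn hdeg)
      (spectralHitTime_self _ _ _ v)
      (fun u hu => spectralHitTime_eq_one_add (sum_row_of_mem_rowStochastic hP)
        (fun k _ => transition_mulVec_div_sqrt hdeg hπ (heig k))
        (fun k hk => (hlamlt k (by simpa using hk)).ne)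
        (sum_sdiff_mul_eq_neg_one_of_orthonormal hπpos horth hφ1 hu)) u
  rw [commuteTime, hhit, hhit, spectralHitTime_add_swap]
end
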